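/- Every eigenvalue of the Lindblad generator has nonpositive real part: if γ ∈ ℂ is an eigenvalue of 𝓛 viewed as a ℂ-linear endomorphism of M_N(ℂ), then Re γ ≤ 0. -/

import Mathlib

/-!
Write an eigenvector as `ρ = U * P` with `U` unitary and `P ≥ 0` (polar decomposition) and pair
`𝓛 ρ = γ • ρ` with `Uᴴ` under the trace. On the right, `tr (Uᴴ * ρ) = tr P > 0`. On the left, the
Hamiltonian part `-i[H, ρ]` contributes a purely imaginary number, and after writing `P = Bᴴ * B`
the dissipator of a jump operator `L` contributes `⟪X, Y⟫ - (‖X‖² + ‖Y‖²) / 2` in the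
Hilbert–Schmidt inner product, with `X = U L Bᴴ`, `Y = L U Bᴴ`; its real part is `≤ 0`.
Hence `Re γ * tr P ≤ 0`.
-/

open Matrix
open scoped ComplexOrder

attribute [local instance] Matrix.normedAddCommGroup Matrix.normedSpace

/-- The Lindblad generator `𝓛(ρ) = -i[H,ρ] + Σ_d (V_d ρ V_d† - ½(V_d† V_d ρ + ρ V_d† V_d))`,
as a `ℂ`-linear endomorphism of the matrix space. -/
noncomputable def lindbladOp {n : Type*} [Fintype n] [DecidableEq n] {ι : Type*} [Fintype ι]
    (H : Matrix n n ℂ) (V : ι → Matrix n n ℂ) :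
    Matrix n n ℂ →ₗ[ℂ] Matrix n n ℂ where
  toFun ρ := -Complex.I • (H * ρ - ρ * H) +
    ∑ d, (V d * ρ * (V d)ᴴ - (1 / 2 : ℂ) • ((V d)ᴴ * V d * ρ + ρ * ((V d)ᴴ * V d)))
  map_add' x y := by
    simp only [mul_add, add_mul, smul_add, sub_eq_add_neg, neg_add,
      Finset.sum_add_distrib, Finset.sum_neg_distrib]
    abel
  map_smul' c x := by
    simp only [Matrix.mul_smul, Matrix.smul_mul, smul_sub, smul_add, Finset.smul_sum,
      smul_comm c, RingHom.id_apply]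

/-- A density matrix: positive semidefinite with trace one. -/
def IsDensityMatrix {n : Type*} [Fintype n] (ρ : Matrix n n ℂ) : Prop :=
  ρ.PosSemidef ∧ ρ.trace = 1

/-- A steady state of the Lindblad dynamics. -/
noncomputable def IsSteadyState {n : Type*} [Fintype n] [DecidableEq n] {ι : Type*} [Fintype ι]
    (H : Matrix n n ℂ) (V : ι → Matrix n n ℂ) (ρ : Matrix n n ℂ) : Prop :=
  IsDensityMatrix ρ ∧ lindbladOp H V ρ = 0

/-- The support of a matrix: its range as a linear map `ℂ^N → ℂ^N`. -/
noncomputable def matSupport {n : Type*} [Fintype n] (ρ : Matrix n n ℂ) :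
    Submodule ℂ (n → ℂ) :=
  LinearMap.range ρ.mulVecLin

/-- Time evolution `ρ(t) = exp(t𝓛)(ρ₀)`. -/
noncomputable def evolve {n : Type*} [Fintype n] [DecidableEq n] {ι : Type*} [Fintype ι]
    (H : Matrix n n ℂ) (V : ι → Matrix n n ℂ) (t : ℝ) (ρ : Matrix n n ℂ) : Matrix n n ℂ :=
  letI R : NormedRing (Matrix n n ℂ →L[ℂ] Matrix n n ℂ) := ContinuousLinearMap.toNormedRing
  @NormedSpace.exp _ R.toRing R.toSeminormedRing.toPseudoMetricSpace.toUniformSpace.toTopologicalSpace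
    inferInstance ((t : ℂ) • (LinearMap.toContinuousLinearMap (lindbladOp H V))) ρ

open scoped MatrixOrder

theorem LinearMap.exists_linearIsometry_range_of_norm_map_eq {R E F : Type*} [Ring R]
    [AddCommGroup E] [Module R E] [NormedAddCommGroup F] [Module R F] {f g : E →ₗ[R] F}
    (h : ∀ x, ‖f x‖ = ‖g x‖) :
    ∃ L : range g →ₗᵢ[R] F, ∀ x, L ⟨g x, mem_range_self g x⟩ = f x := by
  have hker : ker g ≤ ker f := fun x hx => by
    rw [mem_ker, ← norm_eq_zero, h, norm_eq_zero]
    exact hx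
  let L := (ker g).liftQ f hker ∘ₗ g.quotKerEquivRange.symm.toLinearMap
  have hL : ∀ x, L ⟨g x, mem_range_self g x⟩ = f x := fun x => by
    simp [L, quotKerEquivRange_symm_apply_image]
  refine ⟨⟨L, ?_⟩, hL⟩
  rintro ⟨_, x, rfl⟩
  rw [hL, h, Submodule.coe_norm]

theorem LinearMap.exists_linearIsometry_comp_eq_of_norm_map_eq {𝕜 E : Type*} [RCLike 𝕜]
    [NormedAddCommGroup E] [InnerProductSpace 𝕜 E] [FiniteDimensional 𝕜 E] {f g : E →ₗ[𝕜] E}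
    (h : ∀ x, ‖f x‖ = ‖g x‖) : ∃ u : E →ₗᵢ[𝕜] E, f = u.toLinearMap ∘ₗ g := by
  obtain ⟨L, hL⟩ := exists_linearIsometry_range_of_norm_map_eq h
  exact ⟨L.extend, ext fun x => (hL x).symm.trans (L.extend_apply _).symm⟩

namespace Matrix

variable {𝕜 n : Type*} [RCLike 𝕜] [Fintype n] [DecidableEq n]

theorem exists_mem_unitaryGroup_mul_eq_of_conjTranspose_mul_self_eq {A B : Matrix n n 𝕜}
    (h : Aᴴ * A = Bᴴ * B) : ∃ U ∈ unitaryGroup n 𝕜, A = U * B := by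
  let e := toEuclideanCLM (n := n) (𝕜 := 𝕜)
  have hnorm : ∀ x, ‖e A x‖ = ‖e B x‖ := fun x => by
    refine (pow_left_inj₀ (norm_nonneg _) (norm_nonneg _) two_ne_zero).mp ?_
    simp only [ContinuousLinearMap.apply_norm_sq_eq_inner_adjoint_left,
      ← ContinuousLinearMap.star_eq_adjoint, ← ContinuousLinearMap.mul_def, ← map_star,
      ← map_mul, star_eq_conjTranspose, h]
  obtain ⟨u, hu⟩ := LinearMap.exists_linearIsometry_comp_eq_of_norm_map_eq hnorm
  refine ⟨e.symm u.toContinuousLinearMap, ?_, EquivLike.injective e ?_⟩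
  · rw [mem_unitaryGroup_iff', ← (EquivLike.injective e).eq_iff, map_mul e, map_star e, map_one e,
      StarAlgEquiv.apply_symm_apply, ContinuousLinearMap.star_eq_adjoint]
    exact u.adjoint_comp_self
  · rw [map_mul e, StarAlgEquiv.apply_symm_apply]
    exact ContinuousLinearMap.coe_injective hu

theorem exists_mem_unitaryGroup_mul_posSemidef (A : Matrix n n 𝕜) :
    ∃ U ∈ unitaryGroup n 𝕜, ∃ P : Matrix n n 𝕜, P.PosSemidef ∧ A = U * P := by
  have hP : (CFC.sqrt (Aᴴ * A)).PosSemidef := (CFC.sqrt_nonneg _).posSemidef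
  have hPP : Aᴴ * A = (CFC.sqrt (Aᴴ * A))ᴴ * CFC.sqrt (Aᴴ * A) := by
    rw [hP.isHermitian.eq, CFC.sqrt_mul_sqrt_self _ (posSemidef_conjTranspose_mul_self A).nonneg]
  obtain ⟨U, hU, hA⟩ := exists_mem_unitaryGroup_mul_eq_of_conjTranspose_mul_self_eq hPP
  exact ⟨U, hU, _, hP, hA⟩

end Matrix

noncomputable def dissipator {n : Type*} [Fintype n] (L ρ : Matrix n n ℂ) : Matrix n n ℂ :=
  L * ρ * Lᴴ - (1 / 2 : ℂ) • (Lᴴ * L * ρ + ρ * (Lᴴ * L))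

theorem lindbladOp_apply {n ι : Type*} [Fintype n] [DecidableEq n] [Fintype ι]
    (H : Matrix n n ℂ) (V : ι → Matrix n n ℂ) (ρ : Matrix n n ℂ) :
    lindbladOp H V ρ = -Complex.I • (H * ρ - ρ * H) + ∑ d, dissipator (V d) ρ :=
  rfl

namespace Matrix

variable {n : Type*} [Fintype n]

theorem IsHermitian.im_trace_mul_eq_zero {A B : Matrix n n ℂ} (hA : A.IsHermitian)
    (hB : B.IsHermitian) : (A * B).trace.im = 0 := by
  have h : star (A * B).trace = (A * B).trace := by
    rw [← trace_conjTranspose, conjTranspose_mul, hA.eq, hB.eq, trace_mul_comm]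
  exact Complex.conj_eq_iff_im.mp h

theorem re_trace_conjTranspose_mul_le (A B : Matrix n n ℂ) :
    (Aᴴ * B).trace.re ≤ ((Aᴴ * A).trace.re + (Bᴴ * B).trace.re) / 2 := by
  have hsq := Complex.nonneg_iff.mp (posSemidef_conjTranspose_mul_self (A - B)).trace_nonneg
  have hBA : (Bᴴ * A).trace.re = (Aᴴ * B).trace.re := by
    rw [← conjTranspose_conjTranspose A, ← conjTranspose_mul, trace_conjTranspose,
      conjTranspose_conjTranspose]
    exact Complex.conj_re _
  simp only [conjTranspose_sub, sub_mul, mul_sub, trace_sub, Complex.sub_re] at hsq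
  linarith [hsq.1]

end Matrix

section Dissipativity

variable {n : Type*} [Fintype n] [DecidableEq n] {U P : Matrix n n ℂ}

theorem re_trace_conjTranspose_mul_hamiltonian_eq_zero {H : Matrix n n ℂ} (hH : H.IsHermitian)
    (hU : Uᴴ * U = 1) (hP : P.IsHermitian) :
    (Uᴴ * (-Complex.I • (H * (U * P) - U * P * H))).trace.re = 0 := by
  have h₁ : (Uᴴ * (H * (U * P))).trace.im = 0 := by
    simpa only [Matrix.mul_assoc] using
      (isHermitian_conjTranspose_mul_mul U hH).im_trace_mul_eq_zero hP
  have h₂ : (Uᴴ * (U * P * H)).trace.im = 0 := by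
    rw [← Matrix.mul_assoc, ← Matrix.mul_assoc, hU, Matrix.one_mul]
    exact hP.im_trace_mul_eq_zero hH
  simp [Matrix.mul_sub, h₁, h₂]

theorem re_trace_conjTranspose_mul_dissipator_nonpos (L : Matrix n n ℂ) (hU : Uᴴ * U = 1)
    (hP : P.PosSemidef) : (Uᴴ * dissipator L (U * P)).trace.re ≤ 0 := by
  obtain ⟨B, rfl⟩ := CStarAlgebra.nonneg_iff_eq_star_mul_self.mp hP.nonneg
  rw [star_eq_conjTranspose]
  set X := U * L * Bᴴ
  set Y := L * U * Bᴴ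
  have hjump : (Uᴴ * (L * (U * (Bᴴ * B)) * Lᴴ)).trace = (Xᴴ * Y).trace := by
    simp only [X, Y, conjTranspose_mul, conjTranspose_conjTranspose, Matrix.mul_assoc]
    rw [trace_mul_comm B]
    simp only [Matrix.mul_assoc]
    rw [trace_mul_comm Lᴴ]
    simp only [Matrix.mul_assoc]
  have hdecay_left : (Uᴴ * (Lᴴ * L * (U * (Bᴴ * B)))).trace = (Yᴴ * Y).trace := by
    simp only [Y, conjTranspose_mul, conjTranspose_conjTranspose, Matrix.mul_assoc]
    rw [trace_mul_comm B]
    simp only [Matrix.mul_assoc]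
  have hdecay_right : (Uᴴ * (U * (Bᴴ * B) * (Lᴴ * L))).trace = (Xᴴ * X).trace := by
    simp only [X, conjTranspose_mul, conjTranspose_conjTranspose, Matrix.mul_assoc]
    rw [← Matrix.mul_assoc Uᴴ U, hU, Matrix.one_mul, ← Matrix.mul_assoc Uᴴ U, hU, Matrix.one_mul,
      trace_mul_comm Bᴴ]
    simp only [Matrix.mul_assoc]
  have hXY := re_trace_conjTranspose_mul_le X Y
  simp only [dissipator, Matrix.mul_sub, Matrix.mul_smul, Matrix.mul_add, trace_sub, trace_smul,
    trace_add, hjump, hdecay_left, hdecay_right, smul_eq_mul, Complex.sub_re, Complex.mul_re]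
  norm_num
  linarith

theorem re_trace_conjTranspose_mul_lindbladOp_nonpos {ι : Type*} [Fintype ι] {H : Matrix n n ℂ}
    (hH : H.IsHermitian) (V : ι → Matrix n n ℂ) (hU : Uᴴ * U = 1) (hP : P.PosSemidef) :
    (Uᴴ * lindbladOp H V (U * P)).trace.re ≤ 0 := by
  rw [lindbladOp_apply, Matrix.mul_add, trace_add, Matrix.mul_sum, trace_sum, Complex.add_re,
    Complex.re_sum, re_trace_conjTranspose_mul_hamiltonian_eq_zero hH hU hP.isHermitian, zero_add]
  exact Finset.sum_nonpos fun d _ => re_trace_conjTranspose_mul_dissipator_nonpos (V d) hU hP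

end Dissipativity

theorem lindblad_eigenvalue_re_nonpos_general (N : ℕ)
    (H : Matrix (Fin N) (Fin N) ℂ) (hH : H.IsHermitian)
    {ι : Type*} [Fintype ι] (V : ι → Matrix (Fin N) (Fin N) ℂ) :
    ∀ γ : ℂ, Module.End.HasEigenvalue (lindbladOp H V) γ → γ.re ≤ 0 := by
  intro γ hγ
  obtain ⟨ρ, hρ⟩ := hγ.exists_hasEigenvector
  obtain ⟨U, hU, P, hP, rfl⟩ := exists_mem_unitaryGroup_mul_posSemidef ρ
  have hU' : Uᴴ * U = 1 := mem_unitaryGroup_iff'.mp hU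
  obtain ⟨htr_re, htr_im⟩ : 0 < P.trace.re ∧ 0 = P.trace.im := by
    refine Complex.lt_def.mp (hP.trace_nonneg.lt_of_ne' fun h => hρ.2 ?_)
    rw [hP.trace_eq_zero_iff.mp h, Matrix.mul_zero]
  have key := re_trace_conjTranspose_mul_lindbladOp_nonpos hH V hU' hP
  rw [hρ.apply_eq_smul, Matrix.mul_smul, trace_smul, ← Matrix.mul_assoc, hU', Matrix.one_mul,
    smul_eq_mul, Complex.mul_re, ← htr_im, mul_zero, sub_zero] at key
  exact nonpos_of_mul_nonpos_left key htr_re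

/-- Every eigenvalue of the Lindblad generator has nonpositive real part. -/
theorem lindblad_eigenvalue_re_nonpos (N : ℕ) (hN : 1 ≤ N)
    (H : Matrix (Fin N) (Fin N) ℂ) (hH : H.IsHermitian)
    {ι : Type*} [Fintype ι] (V : ι → Matrix (Fin N) (Fin N) ℂ) :
    ∀ γ : ℂ, Module.End.HasEigenvalue (lindbladOp H V) γ → γ.re ≤ 0 :=
  lindblad_eigenvalue_re_nonpos_general N H hH V
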